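/- arXiv:2507.01650 — 3 statements merged into one kernel-verified Lean document; each statement's English description precedes it below -/
import Mathlib

section
/- Let (A, ≻, ≺) be a finite-dimensional anti-dendriform algebra and r ∈ A⊗A such that r + τ(r) is invariant. Then for all x ∈ A and ζ ∈ A*: L_≺(x)T_{r+τ(r)}(ζ) = T_{r+τ(r)}(R_≻*(x)ζ) and T_{r+τ(r)}(L_≺*(x)ζ) = R_≻(x)T_{r+τ(r)}(ζ). -/
open TensorProduct

set_option synthInstance.maxHeartbeats 1000000
set_option maxHeartbeats 1600000

variable {K : Type*} [Field K]

/-- The anti-dendriform algebra identities for two bilinear operations `s` (≻) and `p` (≺):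
`x≻(y≻z) = -(x·y)≻z = -x≺(y·z) = (x≺y)≺z` and `(x≻y)≺z = x≻(y≺z)`, where `x·y = x≻y + x≺y`. -/
def IsAntiDend {M : Type*} [AddCommGroup M] [Module K M]
    (s p : M →ₗ[K] M →ₗ[K] M) : Prop :=
  ∀ x y z : M,
    s x (s y z) = - s (s x y + p x y) z ∧
    s x (s y z) = - p x (s y z + p y z) ∧
    s x (s y z) = p (p x y) z ∧
    p (s x y) z = s x (p y z)

/-- The bilinear map `a ⊗ b ↦ (ζ ↦ ζ(a) • b)` used to define `T_r`. -/
noncomputable def Tbil {M : Type*} [AddCommGroup M] [Module K M] :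
    M →ₗ[K] M →ₗ[K] (Module.Dual K M →ₗ[K] M) :=
  LinearMap.mk₂ K (fun a b => (Module.Dual.eval K M a).smulRight b)
    (fun a a' b => by ext ζ; simp [add_smul])
    (fun c a b => by
      ext ζ
      simp only [LinearMap.smulRight_apply, LinearMap.smul_apply, map_smul,
        Module.Dual.eval_apply, smul_eq_mul, mul_smul])
    (fun a b b' => by ext ζ; simp)
    (fun c a b => by
      ext ζ
      simp only [LinearMap.smulRight_apply, LinearMap.smul_apply]
      exact smul_comm _ _ _)

/-- `T_r : A* → A`, `⟨T_r ζ, η⟩ = ⟨r, ζ ⊗ η⟩`; concretely `T_r ζ = Σ ζ(aᵢ) • bᵢ`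
for `r = Σ aᵢ ⊗ bᵢ`. -/
noncomputable def TmL {M : Type*} [AddCommGroup M] [Module K M] (r : M ⊗[K] M) :
    Module.Dual K M →ₗ[K] M :=
  TensorProduct.lift Tbil r

/-- The flip `τ : A ⊗ A → A ⊗ A`. -/
noncomputable def tau {M : Type*} [AddCommGroup M] [Module K M] (r : M ⊗[K] M) : M ⊗[K] M :=
  TensorProduct.comm K M M r

/-- `r` is invariant: `(R_≺(x)⊗I + I⊗L_·(x)) r = 0` and `(R_·(x)⊗I + I⊗L_≻(x)) r = 0`. -/
def Invariant {M : Type*} [AddCommGroup M] [Module K M]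
    (s p : M →ₗ[K] M →ₗ[K] M) (r : M ⊗[K] M) : Prop :=
  ∀ x : M,
    TensorProduct.map (p.flip x) (LinearMap.id : M →ₗ[K] M) r
      + TensorProduct.map (LinearMap.id : M →ₗ[K] M) ((s + p) x) r = 0 ∧
    TensorProduct.map ((s + p).flip x) (LinearMap.id : M →ₗ[K] M) r
      + TensorProduct.map (LinearMap.id : M →ₗ[K] M) (s x) r = 0

variable {A : Type*} [AddCommGroup A] [Module K A]

/- Invariance of the symmetric tensor `u = r + τ(r)` gives `(R_≻(x) ⊗ I) u = (I ⊗ L_≺(x)) u`;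
flipping it by `τ`, which fixes `u`, gives `(L_≺(x) ⊗ I) u = (I ⊗ R_≻(x)) u`. Since
`T_{(f ⊗ I) u} = T_u ∘ f*` and `T_{(I ⊗ g) u} = g ∘ T_u`, these are the two identities. -/

section TensorMap

variable {M : Type*} [AddCommGroup M] [Module K M]

lemma TmL_add (r₁ r₂ : M ⊗[K] M) : TmL (r₁ + r₂) = TmL r₁ + TmL r₂ :=
  map_add (lift Tbil) r₁ r₂

lemma TmL_map_id_right (f : M →ₗ[K] M) (r : M ⊗[K] M) (ζ : Module.Dual K M) :
    TmL (map f LinearMap.id r) ζ = TmL r (f.dualMap ζ) := by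
  induction r using TensorProduct.induction_on with
  | zero => simp [TmL]
  | tmul a b => simp [TmL, Tbil]
  | add r₁ r₂ h₁ h₂ => simp only [map_add, TmL_add, LinearMap.add_apply, h₁, h₂]

lemma TmL_map_id_left (g : M →ₗ[K] M) (r : M ⊗[K] M) (ζ : Module.Dual K M) :
    TmL (map LinearMap.id g r) ζ = g (TmL r ζ) := by
  induction r using TensorProduct.induction_on with
  | zero => simp [TmL]
  | tmul a b => simp [TmL, Tbil]
  | add r₁ r₂ h₁ h₂ => simp only [map_add, TmL_add, LinearMap.add_apply, h₁, h₂]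

lemma tau_add_tau_self (r : M ⊗[K] M) : tau (r + tau r) = r + tau r := by
  simp only [tau, map_add, TensorProduct.comm_comm, add_comm]

lemma map_id_eq_map_id_of_tau_eq {f g : M →ₗ[K] M} {u : M ⊗[K] M} (hu : tau u = u)
    (hfg : map f LinearMap.id u = map LinearMap.id g u) :
    map g LinearMap.id u = map LinearMap.id f u := by
  have := congrArg tau hfg
  simp only [tau, ← TensorProduct.map_comm] at this hu
  rw [hu] at this
  exact this.symm

end TensorMap

lemma Invariant.map_flip_succ_eq_map_prec {M : Type*} [AddCommGroup M] [Module K M]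
    {s p : M →ₗ[K] M →ₗ[K] M} {u : M ⊗[K] M} (hu : Invariant s p u) (x : M) :
    map (s.flip x) LinearMap.id u = map LinearMap.id (p x) u := by
  obtain ⟨h₁, h₂⟩ := hu x
  rw [LinearMap.add_apply, TensorProduct.map_add_right, LinearMap.add_apply] at h₁
  rw [show (s + p).flip x = s.flip x + p.flip x from rfl, TensorProduct.map_add_left,
    LinearMap.add_apply] at h₂
  rw [← sub_eq_zero, ← sub_eq_zero.mpr (h₂.trans h₁.symm)]
  abel

theorem stmt6_general
    (s p : A →ₗ[K] A →ₗ[K] A) (r : A ⊗[K] A)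
    (hinv : Invariant s p (r + tau r)) :
    ∀ (x : A) (ζ : Module.Dual K A),
      p x (TmL (r + tau r) ζ) = TmL (r + tau r) ((s.flip x).dualMap ζ) ∧
      TmL (r + tau r) ((p x).dualMap ζ) = s.flip x (TmL (r + tau r) ζ) := by
  intro x ζ
  have hright := hinv.map_flip_succ_eq_map_prec x
  have hleft := map_id_eq_map_id_of_tau_eq (tau_add_tau_self r) hright
  constructor
  · rw [← TmL_map_id_left, ← hright, TmL_map_id_right]
  · rw [← TmL_map_id_right, hleft, TmL_map_id_left]

/-- if `r + τ(r)` is invariant then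
`L_≺(x)T_{r+τ(r)}(ζ) = T_{r+τ(r)}(R_≻*(x)ζ)` and
`T_{r+τ(r)}(L_≺*(x)ζ) = R_≻(x)T_{r+τ(r)}(ζ)`. -/
theorem stmt6 [FiniteDimensional K A]
    (s p : A →ₗ[K] A →ₗ[K] A) (h : IsAntiDend s p) (r : A ⊗[K] A)
    (hinv : Invariant s p (r + tau r)) :
    ∀ (x : A) (ζ : Module.Dual K A),
      p x (TmL (r + tau r) ζ) = TmL (r + tau r) ((s.flip x).dualMap ζ) ∧
      TmL (r + tau r) ((p x).dualMap ζ) = s.flip x (TmL (r + tau r) ζ) :=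
  stmt6_general s p r hinv
end

section
/- Let (A, ≻, ≺) be a finite-dimensional anti-dendriform algebra and r ∈ A⊗A. Then r satisfies the anti-dendriform Yang-Baxter equation r₁₂·r₁₃ + r₂₃≻r₁₂ - r₁₃≺r₂₃ = 0 if and only if T_r(η) ≺ T_r(ζ) = T_r(R_≻*(T_r(η))ζ + L_·*(T_{τ(r)}(ζ))η) for all η, ζ ∈ A*. -/
/-!
Contracting `D(r) = r₁₂·r₁₃ + r₂₃≻r₁₂ - r₁₃≺r₂₃` with `η` in the first and `ζ` in the second
tensor factor turns the three terms into `T_r(L_·*(T_{τ(r)} ζ) η)`, `T_r(R_≻*(T_r η) ζ)` and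
`T_r η ≺ T_r ζ` respectively. Over a field a tensor vanishes iff all its contractions with
functionals do, so `D(r) = 0` is equivalent to the stated identity for all `η, ζ`.
-/

open TensorProduct

set_option synthInstance.maxHeartbeats 1000000
set_option maxHeartbeats 1600000

variable {K : Type*} [Field K]

/-- `(a⊗b)⊗(c⊗d) ↦ (m a c) ⊗ b ⊗ d` : the product is placed in the first tensor slot,
giving `r₁₂ ∗ r₁₃` when applied to `r ⊗ r`. -/
noncomputable def place1 {M : Type*} [AddCommGroup M] [Module K M]
    (m : M →ₗ[K] M →ₗ[K] M) :
    (M ⊗[K] M) ⊗[K] (M ⊗[K] M) →ₗ[K] M ⊗[K] (M ⊗[K] M) :=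
  (TensorProduct.map (TensorProduct.lift m)
      (LinearMap.id : M ⊗[K] M →ₗ[K] M ⊗[K] M)) ∘ₗ
    (TensorProduct.tensorTensorTensorComm K M M M M).toLinearMap

/-- `(a⊗b)⊗(c⊗d) ↦ c ⊗ (m a d) ⊗ b` : the product in the second slot, giving `r₂₃ ∗ r₁₂`. -/
noncomputable def place2 {M : Type*} [AddCommGroup M] [Module K M]
    (m : M →ₗ[K] M →ₗ[K] M) :
    (M ⊗[K] M) ⊗[K] (M ⊗[K] M) →ₗ[K] M ⊗[K] (M ⊗[K] M) :=
  (TensorProduct.leftComm K M M M).toLinearMap ∘ₗ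
  (TensorProduct.map (LinearMap.id : M →ₗ[K] M) (TensorProduct.comm K M M).toLinearMap) ∘ₗ
  (TensorProduct.map (TensorProduct.lift m)
      (LinearMap.id : M ⊗[K] M →ₗ[K] M ⊗[K] M)) ∘ₗ
  (TensorProduct.tensorTensorTensorComm K M M M M).toLinearMap ∘ₗ
  (TensorProduct.congr (LinearEquiv.refl K (M ⊗[K] M)) (TensorProduct.comm K M M)).toLinearMap

/-- `(a⊗b)⊗(c⊗d) ↦ a ⊗ c ⊗ (m b d)` : the product in the third slot, giving `r₁₃ ∗ r₂₃`. -/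
noncomputable def place3 {M : Type*} [AddCommGroup M] [Module K M]
    (m : M →ₗ[K] M →ₗ[K] M) :
    (M ⊗[K] M) ⊗[K] (M ⊗[K] M) →ₗ[K] M ⊗[K] (M ⊗[K] M) :=
  (TensorProduct.assoc K M M M).toLinearMap ∘ₗ
  (TensorProduct.map (LinearMap.id : M ⊗[K] M →ₗ[K] M ⊗[K] M) (TensorProduct.lift m)) ∘ₗ
  (TensorProduct.tensorTensorTensorComm K M M M M).toLinearMap

/-- `D(r) = r₁₂·r₁₃ + r₂₃≻r₁₂ - r₁₃≺r₂₃`. -/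
noncomputable def adD {M : Type*} [AddCommGroup M] [Module K M]
    (s p : M →ₗ[K] M →ₗ[K] M) (r : M ⊗[K] M) : M ⊗[K] (M ⊗[K] M) :=
  place1 (s + p) (r ⊗ₜ[K] r) + place2 s (r ⊗ₜ[K] r) - place3 p (r ⊗ₜ[K] r)

/-- `D₁(r) = r₂₃·r₁₂ + r₁₃≻r₂₃ + r₁₂≺r₁₃`. -/
noncomputable def adD1 {M : Type*} [AddCommGroup M] [Module K M]
    (s p : M →ₗ[K] M →ₗ[K] M) (r : M ⊗[K] M) : M ⊗[K] (M ⊗[K] M) :=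
  place2 (s + p) (r ⊗ₜ[K] r) + place3 s (r ⊗ₜ[K] r) + place1 p (r ⊗ₜ[K] r)

/-- `D₂(r) = r₁₃·r₂₃ - r₁₂≻r₁₃ + r₂₃≺r₁₂`. -/
noncomputable def adD2 {M : Type*} [AddCommGroup M] [Module K M]
    (s p : M →ₗ[K] M →ₗ[K] M) (r : M ⊗[K] M) : M ⊗[K] (M ⊗[K] M) :=
  place3 (s + p) (r ⊗ₜ[K] r) - place1 s (r ⊗ₜ[K] r) + place2 p (r ⊗ₜ[K] r)

/-- The anti-dendriform Yang-Baxter equation `D(r) = 0`. -/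
noncomputable def AYBE {M : Type*} [AddCommGroup M] [Module K M]
    (s p : M →ₗ[K] M →ₗ[K] M) (r : M ⊗[K] M) : Prop :=
  adD s p r = 0

variable {A : Type*} [AddCommGroup A] [Module K A]

section Contraction

variable {M N : Type*} [AddCommGroup M] [Module K M] [AddCommGroup N] [Module K N]

noncomputable def contractFst (ξ : Module.Dual K M) : M ⊗[K] N →ₗ[K] N :=
  TensorProduct.lid K N ∘ₗ ξ.rTensor N

@[simp]
lemma contractFst_tmul (ξ : Module.Dual K M) (m : M) (n : N) :
    contractFst ξ (m ⊗ₜ[K] n) = ξ m • n := by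
  simp [contractFst]

lemma eq_zero_iff_forall_contractFst_eq_zero (t : M ⊗[K] N) :
    t = 0 ↔ ∀ ξ : Module.Dual K M, contractFst ξ t = 0 := by
  refine ⟨fun ht ξ => by rw [ht, map_zero], fun h => ?_⟩
  classical
  let B := Module.Basis.ofVectorSpace K M
  apply (TensorProduct.equivFinsuppOfBasisLeft B).injective
  ext i
  -- the `i`-th coefficient of `t` in the basis `B` is its contraction with `B.coord i`
  simpa [TensorProduct.equivFinsuppOfBasisLeft_apply, contractFst] using h (B.coord i)

end Contraction

section DualMap

variable {M₁ M₂ : Type*} [AddCommGroup M₁] [Module K M₁] [AddCommGroup M₂] [Module K M₂]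

@[simp]
lemma LinearMap.dualMap_add (f g : M₁ →ₗ[K] M₂) : (f + g).dualMap = f.dualMap + g.dualMap := by
  simp only [LinearMap.dualMap_def, map_add]

@[simp]
lemma LinearMap.dualMap_zero : (0 : M₁ →ₗ[K] M₂).dualMap = 0 := by
  simp only [LinearMap.dualMap_def, map_zero]

end DualMap

section TmL

variable {M : Type*} [AddCommGroup M] [Module K M]

@[simp]
lemma TmL_tmul (a b : M) (η : Module.Dual K M) : TmL (a ⊗ₜ[K] b) η = η a • b := rfl

@[simp]
lemma TmL_add_s8 (x y : M ⊗[K] M) (η : Module.Dual K M) :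
    TmL (x + y) η = TmL x η + TmL y η := by
  simp [TmL]

@[simp]
lemma TmL_zero (η : Module.Dual K M) : TmL (0 : M ⊗[K] M) η = 0 := by
  simp [TmL]

@[simp]
lemma tau_tmul (a b : M) : tau (a ⊗ₜ[K] b) = b ⊗ₜ[K] a := rfl

@[simp]
lemma tau_add (x y : M ⊗[K] M) : tau (x + y) = tau x + tau y := map_add _ _ _

@[simp]
lemma tau_zero : tau (0 : M ⊗[K] M) = 0 := map_zero _

end TmL

section Place

variable {M : Type*} [AddCommGroup M] [Module K M] (m : M →ₗ[K] M →ₗ[K] M)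
  (r₁ r₂ : M ⊗[K] M) (η ζ : Module.Dual K M)

lemma contractFst_contractFst_place1 :
    contractFst ζ (contractFst η (place1 m (r₁ ⊗ₜ[K] r₂))) =
      TmL r₂ ((m (TmL (tau r₁) ζ)).dualMap η) := by
  induction r₁ using TensorProduct.induction_on with
  | zero => simp
  | add x y hx hy => simp [add_tmul, hx, hy]
  | tmul a b =>
    induction r₂ using TensorProduct.induction_on with
    | zero => simp
    | add x y hx hy => simp [tmul_add, hx, hy]
    | tmul c d => simp [place1, smul_smul, mul_comm]

lemma contractFst_contractFst_place2 :
    contractFst ζ (contractFst η (place2 m (r₁ ⊗ₜ[K] r₂))) =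
      TmL r₁ ((m.flip (TmL r₂ η)).dualMap ζ) := by
  induction r₁ using TensorProduct.induction_on with
  | zero => simp
  | add x y hx hy => simp [add_tmul, hx, hy]
  | tmul a b =>
    induction r₂ using TensorProduct.induction_on with
    | zero => simp
    | add x y hx hy => simp [tmul_add, hx, hy, add_smul]
    | tmul c d => simp [place2, smul_smul]

lemma contractFst_contractFst_place3 :
    contractFst ζ (contractFst η (place3 m (r₁ ⊗ₜ[K] r₂))) = m (TmL r₁ η) (TmL r₂ ζ) := by
  induction r₁ using TensorProduct.induction_on with
  | zero => simp
  | add x y hx hy => simp [add_tmul, hx, hy]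
  | tmul a b =>
    induction r₂ using TensorProduct.induction_on with
    | zero => simp
    | add x y hx hy => simp [tmul_add, hx, hy]
    | tmul c d => simp [place3, smul_smul, mul_comm]

end Place

lemma contractFst_contractFst_adD {M : Type*} [AddCommGroup M] [Module K M]
    (s p : M →ₗ[K] M →ₗ[K] M) (r : M ⊗[K] M) (η ζ : Module.Dual K M) :
    contractFst ζ (contractFst η (adD s p r)) =
      TmL r ((s.flip (TmL r η)).dualMap ζ + ((s + p) (TmL (tau r) ζ)).dualMap η)
        - p (TmL r η) (TmL r ζ) := by
  rw [adD, map_sub, map_sub, map_add, map_add, contractFst_contractFst_place1,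
    contractFst_contractFst_place2, contractFst_contractFst_place3, map_add, add_comm]

theorem stmt8_general
    (s p : A →ₗ[K] A →ₗ[K] A) (r : A ⊗[K] A) :
    AYBE s p r ↔
      ∀ (η ζ : Module.Dual K A),
        p (TmL r η) (TmL r ζ) =
          TmL r ((s.flip (TmL r η)).dualMap ζ + ((s + p) (TmL (tau r) ζ)).dualMap η) := by
  rw [AYBE, eq_zero_iff_forall_contractFst_eq_zero]
  refine forall_congr' fun η => ?_
  rw [eq_zero_iff_forall_contractFst_eq_zero]
  refine forall_congr' fun ζ => ?_
  rw [contractFst_contractFst_adD, sub_eq_zero, eq_comm]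

/-- `r` solves the AD-YBE iff
`T_r(η) ≺ T_r(ζ) = T_r(R_≻*(T_r(η))ζ + L_·*(T_{τ(r)}(ζ))η)`. -/
theorem stmt8 [FiniteDimensional K A]
    (s p : A →ₗ[K] A →ₗ[K] A) (h : IsAntiDend s p) (r : A ⊗[K] A) :
    AYBE s p r ↔
      ∀ (η ζ : Module.Dual K A),
        p (TmL r η) (TmL r ζ) =
          TmL r ((s.flip (TmL r η)).dualMap ζ + ((s + p) (TmL (tau r) ζ)).dualMap η) :=
  stmt8_general s p r
end

section
/- Let (A, ≻_A, ≺_A, Δ_≻, Δ_≺) be a finite-dimensional anti-dendriform bialgebra with double anti-dendriform algebra D = A ⊕ A*. Let {e₁,…,eₙ} be a basis of A with dual basis {e₁*,…,eₙ*} and set r = Σᵢ eᵢ ⊗ eᵢ* ∈ D⊗D. Then r is a solution of the anti-dendriform Yang-Baxter equation r₁₂·_D r₁₃ + r₂₃≻_D r₁₂ - r₁₃≺_D r₂₃ = 0 in (D, ≻_D, ≺_D). -/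
open TensorProduct

set_option synthInstance.maxHeartbeats 1000000
set_option maxHeartbeats 1600000

variable {K : Type*} [Field K]

section Double

variable (A : Type*) [AddCommGroup A] [Module K A] [FiniteDimensional K A]

/-- For an operation `m` on `A*`, the coadjoint operator `a ↦ R_m(a)*` acting on
`A ≅ A**`. -/
noncomputable def RstarB
    (m : Module.Dual K A →ₗ[K] Module.Dual K A →ₗ[K] Module.Dual K A) :
    Module.Dual K A →ₗ[K] (A →ₗ[K] A) :=
  (((Module.evalEquiv K A).symm.conj).toLinearMap :
      Module.End K (Module.Dual K (Module.Dual K A)) →ₗ[K] Module.End K A) ∘ₗ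
    (Module.Dual.transpose :
      (Module.Dual K A →ₗ[K] Module.Dual K A) →ₗ[K]
        (Module.Dual K (Module.Dual K A) →ₗ[K] Module.Dual K (Module.Dual K A))) ∘ₗ
    m.flip

/-- For an operation `m` on `A*`, the coadjoint operator `a ↦ L_m(a)*` acting on
`A ≅ A**`. -/
noncomputable def LstarB
    (m : Module.Dual K A →ₗ[K] Module.Dual K A →ₗ[K] Module.Dual K A) :
    Module.Dual K A →ₗ[K] (A →ₗ[K] A) :=
  (((Module.evalEquiv K A).symm.conj).toLinearMap :
      Module.End K (Module.Dual K (Module.Dual K A)) →ₗ[K] Module.End K A) ∘ₗ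
    (Module.Dual.transpose :
      (Module.Dual K A →ₗ[K] Module.Dual K A) →ₗ[K]
        (Module.Dual K (Module.Dual K A) →ₗ[K] Module.Dual K (Module.Dual K A))) ∘ₗ
    m

/-- For an operation `m` on `A`, the operator `x ↦ L_m(x)*` on `A*`. -/
noncomputable def LstarA (m : A →ₗ[K] A →ₗ[K] A) :
    A →ₗ[K] (Module.Dual K A →ₗ[K] Module.Dual K A) :=
  Module.Dual.transpose ∘ₗ m

/-- For an operation `m` on `A`, the operator `x ↦ R_m(x)*` on `A*`. -/
noncomputable def RstarA (m : A →ₗ[K] A →ₗ[K] A) :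
    A →ₗ[K] (Module.Dual K A →ₗ[K] Module.Dual K A) :=
  Module.Dual.transpose ∘ₗ m.flip

variable {A}

/-- The product `≻_D` of the double `D = A ⊕ A*`:
`(x+a) ≻_D (y+b) = x ≻ y - (R*_≺,A* + R*_≻,A*)(a) y + L*_≺,A*(b) x
  + a ≻_{A*} b - (R*_≺,A + R*_≻,A)(x) b + L*_≺,A(y) a`. -/
noncomputable def succD (sA pA : A →ₗ[K] A →ₗ[K] A)
    (sB pB : Module.Dual K A →ₗ[K] Module.Dual K A →ₗ[K] Module.Dual K A) :
    (A × Module.Dual K A) →ₗ[K] (A × Module.Dual K A) →ₗ[K] (A × Module.Dual K A) :=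
  ((sA.compl₁₂ (LinearMap.fst K A (Module.Dual K A)) (LinearMap.fst K A (Module.Dual K A))).compr₂
      (LinearMap.inl K A (Module.Dual K A)))
    + (((RstarB A pB + RstarB A sB).compl₁₂ (LinearMap.snd K A (Module.Dual K A))
        (LinearMap.fst K A (Module.Dual K A))).compr₂ (-(LinearMap.inl K A (Module.Dual K A))))
    + (((LstarB A pB).flip.compl₁₂ (LinearMap.fst K A (Module.Dual K A))
        (LinearMap.snd K A (Module.Dual K A))).compr₂ (LinearMap.inl K A (Module.Dual K A)))
    + ((sB.compl₁₂ (LinearMap.snd K A (Module.Dual K A)) (LinearMap.snd K A (Module.Dual K A))).compr₂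
        (LinearMap.inr K A (Module.Dual K A)))
    + (((RstarA A pA + RstarA A sA).compl₁₂ (LinearMap.fst K A (Module.Dual K A))
        (LinearMap.snd K A (Module.Dual K A))).compr₂ (-(LinearMap.inr K A (Module.Dual K A))))
    + (((LstarA A pA).flip.compl₁₂ (LinearMap.snd K A (Module.Dual K A))
        (LinearMap.fst K A (Module.Dual K A))).compr₂ (LinearMap.inr K A (Module.Dual K A)))

/-- The product `≺_D` of the double `D = A ⊕ A*`:
`(x+a) ≺_D (y+b) = x ≺ y + R*_≻,A*(a) y - (L*_≺,A* + L*_≻,A*)(b) x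
  + a ≺_{A*} b + R*_≻,A(x) b - (L*_≺,A + L*_≻,A)(y) a`. -/
noncomputable def precD (sA pA : A →ₗ[K] A →ₗ[K] A)
    (sB pB : Module.Dual K A →ₗ[K] Module.Dual K A →ₗ[K] Module.Dual K A) :
    (A × Module.Dual K A) →ₗ[K] (A × Module.Dual K A) →ₗ[K] (A × Module.Dual K A) :=
  ((pA.compl₁₂ (LinearMap.fst K A (Module.Dual K A)) (LinearMap.fst K A (Module.Dual K A))).compr₂
      (LinearMap.inl K A (Module.Dual K A)))
    + (((RstarB A sB).compl₁₂ (LinearMap.snd K A (Module.Dual K A))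
        (LinearMap.fst K A (Module.Dual K A))).compr₂ (LinearMap.inl K A (Module.Dual K A)))
    + (((LstarB A pB + LstarB A sB).flip.compl₁₂ (LinearMap.fst K A (Module.Dual K A))
        (LinearMap.snd K A (Module.Dual K A))).compr₂ (-(LinearMap.inl K A (Module.Dual K A))))
    + ((pB.compl₁₂ (LinearMap.snd K A (Module.Dual K A)) (LinearMap.snd K A (Module.Dual K A))).compr₂
        (LinearMap.inr K A (Module.Dual K A)))
    + (((RstarA A sA).compl₁₂ (LinearMap.fst K A (Module.Dual K A))
        (LinearMap.snd K A (Module.Dual K A))).compr₂ (LinearMap.inr K A (Module.Dual K A)))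
    + (((LstarA A pA + LstarA A sA).flip.compl₁₂ (LinearMap.snd K A (Module.Dual K A))
        (LinearMap.fst K A (Module.Dual K A))).compr₂ (-(LinearMap.inr K A (Module.Dual K A))))

end Double

variable {A : Type*} [AddCommGroup A] [Module K A]

/-!
The identity `∑ᵢ f eᵢ ⊗ eᵢ* = ∑ᵢ eᵢ ⊗ (eᵢ* ∘ f)`, valid for every linear `f : A → A`, moves an
operator across `r = ∑ᵢ eᵢ ⊗ eᵢ*`. In `r₂₃ ≻ r₁₂ = ∑ᵢⱼ eⱼ ⊗ (eᵢ ≻ eⱼ*) ⊗ eᵢ*` it turns the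
`A`-component `L*_{≺,A*}(eⱼ*) eᵢ` of `eᵢ ≻ eⱼ*` into `eⱼ* ≺ eᵢ*`, which gives `r₁₃ ≺ r₂₃`, and the
`A*`-component `-R*_{·,A}(eᵢ) eⱼ*` into `-(eⱼ · eᵢ)`, which gives `-r₁₂ · r₁₃`.
-/

theorem Module.Basis.sum_apply_tmul_coord {R M ι : Type*} [CommRing R] [AddCommGroup M]
    [Module R M] [Fintype ι] (b : Module.Basis ι R M) (f : M →ₗ[R] M) :
    ∑ i, f (b i) ⊗ₜ[R] b.coord i = ∑ i, b i ⊗ₜ[R] (b.coord i).comp f := by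
  classical
  apply (TensorProduct.comm R M (Module.Dual R M)).injective
  apply (dualTensorHomEquivOfBasis (N := M) b).injective
  ext x
  simp only [map_sum, comm_tmul, dualTensorHomEquivOfBasis_apply, LinearMap.coe_sum,
    Finset.sum_apply, dualTensorHom_apply, LinearMap.comp_apply, Module.Basis.coord_apply]
  simp only [← map_smul, ← map_sum, b.sum_repr]

theorem Module.Basis.sum_map_apply_tmul_map_coord {R M P Q ι : Type*} [CommRing R]
    [AddCommGroup M] [Module R M] [AddCommMonoid P] [Module R P] [AddCommMonoid Q] [Module R Q]
    [Fintype ι] (b : Module.Basis ι R M) (f : M →ₗ[R] M) (φ : M →ₗ[R] P)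
    (ψ : Module.Dual R M →ₗ[R] Q) :
    ∑ i, φ (f (b i)) ⊗ₜ[R] ψ (b.coord i) = ∑ i, φ (b i) ⊗ₜ[R] ψ ((b.coord i).comp f) := by
  simpa using congrArg (TensorProduct.map φ ψ) (b.sum_apply_tmul_coord f)

section Place

variable {M : Type*} [AddCommGroup M] [Module K M] (m : M →ₗ[K] M →ₗ[K] M) (x a y b : M)

theorem place1_tmul :
    place1 m ((x ⊗ₜ[K] a) ⊗ₜ[K] (y ⊗ₜ[K] b)) = m x y ⊗ₜ[K] (a ⊗ₜ[K] b) := by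
  simp [place1]

theorem place2_tmul :
    place2 m ((x ⊗ₜ[K] a) ⊗ₜ[K] (y ⊗ₜ[K] b)) = y ⊗ₜ[K] (m x b ⊗ₜ[K] a) := by
  simp [place2]

theorem place3_tmul :
    place3 m ((x ⊗ₜ[K] a) ⊗ₜ[K] (y ⊗ₜ[K] b)) = x ⊗ₜ[K] (y ⊗ₜ[K] m a b) := by
  simp [place3]

end Place

section CanonicalTensor

local notation "D" => A × Module.Dual K A

theorem RstarA_apply (m : A →ₗ[K] A →ₗ[K] A) (x : A) (c : Module.Dual K A) :
    RstarA A m x c = c.comp (m.flip x) :=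
  rfl

noncomputable def canonicalTensor {ι : Type*} [Fintype ι] (b : Module.Basis ι K A) : D ⊗[K] D :=
  ∑ i, ((b i, 0) : D) ⊗ₜ[K] ((0, b.coord i) : D)

variable {ι : Type*} [Fintype ι] (b : Module.Basis ι K A)

theorem canonicalTensor_tmul_self :
    canonicalTensor b ⊗ₜ[K] canonicalTensor b =
      ∑ i, ∑ j, (((b i, 0) : D) ⊗ₜ[K] ((0, b.coord i) : D)) ⊗ₜ[K]
        (((b j, 0) : D) ⊗ₜ[K] ((0, b.coord j) : D)) := by
  simp_rw [canonicalTensor, sum_tmul, tmul_sum]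

theorem sum_tmul_inl_apply_tmul_inr_coord (f : A →ₗ[K] A) (w : D) :
    ∑ i, w ⊗ₜ[K] (((f (b i), 0) : D) ⊗ₜ[K] ((0, b.coord i) : D)) =
      ∑ i, w ⊗ₜ[K] (((b i, 0) : D) ⊗ₜ[K] ((0, (b.coord i).comp f) : D)) := by
  simpa [tmul_sum] using congrArg (w ⊗ₜ[K] ·)
    (b.sum_map_apply_tmul_map_coord f (LinearMap.inl K A (Module.Dual K A))
      (LinearMap.inr K A (Module.Dual K A)))

theorem sum_inl_apply_tmul_inr_coord_tmul (f : A →ₗ[K] A) (w : D) :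
    ∑ i, ((f (b i), 0) : D) ⊗ₜ[K] (((0, b.coord i) : D) ⊗ₜ[K] w) =
      ∑ i, ((b i, 0) : D) ⊗ₜ[K] (((0, (b.coord i).comp f) : D) ⊗ₜ[K] w) := by
  simpa using b.sum_map_apply_tmul_map_coord f (LinearMap.inl K A (Module.Dual K A))
    ((TensorProduct.mk K D D).flip w ∘ₗ LinearMap.inr K A (Module.Dual K A))

section FiniteDimensional

variable [FiniteDimensional K A] (sA pA : A →ₗ[K] A →ₗ[K] A)
  (sB pB : Module.Dual K A →ₗ[K] Module.Dual K A →ₗ[K] Module.Dual K A)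

theorem comp_LstarB (c d : Module.Dual K A) : d.comp (LstarB A pB c) = pB c d := by
  ext x
  simp [LstarB, LinearEquiv.conj_apply, Module.Dual.transpose_apply,
    Module.apply_evalEquiv_symm_apply]

theorem succD_inl_inl (x y : A) : succD sA pA sB pB (x, 0) (y, 0) = (sA x y, 0) := by
  simp [succD]

theorem precD_inl_inl (x y : A) : precD sA pA sB pB (x, 0) (y, 0) = (pA x y, 0) := by
  simp [precD]

theorem succD_inl_inr (x : A) (c : Module.Dual K A) :
    succD sA pA sB pB (x, 0) (0, c) = (LstarB A pB c x, -(RstarA A pA x c + RstarA A sA x c)) := by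
  simp [succD]

theorem precD_inr_inr (c d : Module.Dual K A) :
    precD sA pA sB pB (0, c) (0, d) = (0, pB c d) := by
  simp [precD]

theorem place1_add_canonicalTensor :
    place1 (succD sA pA sB pB + precD sA pA sB pB) (canonicalTensor b ⊗ₜ canonicalTensor b) =
      ∑ i, ∑ j, (((sA + pA) (b i) (b j), 0) : D) ⊗ₜ[K]
        (((0, b.coord i) : D) ⊗ₜ[K] ((0, b.coord j) : D)) := by
  simp [canonicalTensor_tmul_self, place1_tmul, succD_inl_inl, precD_inl_inl]

theorem place3_precD_canonicalTensor :
    place3 (precD sA pA sB pB) (canonicalTensor b ⊗ₜ canonicalTensor b) =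
      ∑ i, ∑ j, ((b i, 0) : D) ⊗ₜ[K]
        (((b j, 0) : D) ⊗ₜ[K] ((0, pB (b.coord i) (b.coord j)) : D)) := by
  simp [canonicalTensor_tmul_self, place3_tmul, precD_inr_inr]

theorem place2_succD_canonicalTensor :
    place2 (succD sA pA sB pB) (canonicalTensor b ⊗ₜ canonicalTensor b) =
      place3 (precD sA pA sB pB) (canonicalTensor b ⊗ₜ canonicalTensor b) -
        place1 (succD sA pA sB pB + precD sA pA sB pB)
          (canonicalTensor b ⊗ₜ canonicalTensor b) := by
  rw [place3_precD_canonicalTensor, place1_add_canonicalTensor, canonicalTensor_tmul_self]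
  have split (u : A) (v : Module.Dual K A) : ((u, -v) : D) = (u, 0) - (0, v) := by
    simp
  -- `simp` matches `tmul_sub` and `sum_sub_distrib` only with their types given: the two
  -- `AddCommMonoid` structures on `Module.Dual K A` (the direct one and the one through its
  -- `AddCommGroup`) are not reducibly equal.
  simp only [map_sum, place2_tmul, succD_inl_inr, split, sub_tmul, tmul_sub (P := D ⊗[K] D),
    Finset.sum_sub_distrib (G := D ⊗[K] (D ⊗[K] D))]
  congr 1
  · rw [Finset.sum_comm]
    refine Finset.sum_congr rfl fun j _ => ?_
    simpa [comp_LstarB] using sum_tmul_inl_apply_tmul_inr_coord b (LstarB A pB (b.coord j)) (b j, 0)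
  · conv_rhs => rw [Finset.sum_comm]
    refine Finset.sum_congr rfl fun j _ => ?_
    simpa [RstarA_apply, LinearMap.comp_add, add_comm] using
      (sum_inl_apply_tmul_inr_coord_tmul b (pA.flip (b j) + sA.flip (b j)) (0, b.coord j)).symm

end FiniteDimensional

end CanonicalTensor

theorem stmt14_general [FiniteDimensional K A]
    (sA pA : A →ₗ[K] A →ₗ[K] A)
    (sB pB : Module.Dual K A →ₗ[K] Module.Dual K A →ₗ[K] Module.Dual K A)
    {ι : Type*} [Fintype ι] (b : Module.Basis ι K A) :
    AYBE (succD sA pA sB pB) (precD sA pA sB pB)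
      (∑ i : ι, ((b i, 0) : A × Module.Dual K A) ⊗ₜ[K]
        ((0, b.coord i) : A × Module.Dual K A)) := by
  change adD _ _ (canonicalTensor b) = 0
  rw [adD, place2_succD_canonicalTensor]
  abel

/-- for an anti-dendriform bialgebra (encoded by anti-dendriform
structures on `A` and `A*` such that the double product on `D = A ⊕ A*` is
anti-dendriform), the element `r = Σᵢ eᵢ ⊗ eᵢ*` of `D ⊗ D` solves the AD-YBE in `D`. -/
theorem stmt14 [FiniteDimensional K A]
    (sA pA : A →ₗ[K] A →ₗ[K] A) (hA : IsAntiDend sA pA)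
    (sB pB : Module.Dual K A →ₗ[K] Module.Dual K A →ₗ[K] Module.Dual K A)
    (hB : IsAntiDend sB pB)
    (hD : IsAntiDend (succD sA pA sB pB) (precD sA pA sB pB))
    {ι : Type*} [Fintype ι] (b : Module.Basis ι K A) :
    AYBE (succD sA pA sB pB) (precD sA pA sB pB)
      (∑ i : ι, ((b i, 0) : A × Module.Dual K A) ⊗ₜ[K]
        ((0, b.coord i) : A × Module.Dual K A)) :=
  stmt14_general sA pA sB pB b
end
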